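/- If X ~ χ² with d degrees of freedom, then for any δ ∈ (0,1), Pr(X ≤ d + 2√(d·ln(1/δ)) + 2·ln(1/δ)) ≥ 1 − δ. -/

import Mathlib

/-!
Chernoff's method. For `c < 1/2` a standard Gaussian `g` has `𝔼 exp (c g²) = (1 - 2c)^(-1/2)`,
so by independence `ℙ(‖Z‖² ≥ a) ≤ exp (-c a) (1 - 2c)^(-d/2)`. For
`a = d + 2√(d t) + 2t` the optimal choice `1 - 2c = d / a` turns this into
`exp (-(√(d t) + t)) (a / d)^(d/2)`, and `a / d = 1 + x + x² / 2 ≤ exp x` with `x = 2√(t / d)`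
gives `(a / d)^(d/2) ≤ exp √(d t)`, so the tail is at most `exp (-t)`.
-/

open MeasureTheory ProbabilityTheory Real

namespace ProbabilityTheory

lemma gaussianPDFReal_zero_one_mul_exp_mul_sq (c x : ℝ) :
    gaussianPDFReal 0 1 x * exp (c * x ^ 2) = (√(2 * π))⁻¹ * exp (-(1 / 2 - c) * x ^ 2) := by
  simp only [gaussianPDFReal, NNReal.coe_one, mul_one, sub_zero]
  rw [mul_assoc, ← exp_add]
  ring_nf

lemma integrable_exp_mul_sq_gaussianReal {c : ℝ} (hc : c < 1 / 2) :
    Integrable (fun x ↦ exp (c * x ^ 2)) (gaussianReal 0 1) := by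
  rw [gaussianReal_of_var_ne_zero _ one_ne_zero,
    integrable_withDensity_iff_integrable_smul' (measurable_gaussianPDF 0 1)
      (ae_of_all _ fun _ ↦ gaussianPDF_lt_top)]
  simp_rw [toReal_gaussianPDF, smul_eq_mul, gaussianPDFReal_zero_one_mul_exp_mul_sq]
  exact (integrable_exp_neg_mul_sq (by linarith)).const_mul _

/-- For `c ≥ 1/2` both sides are junk zeros: the integral diverges and `√` of a nonpositive
number is `0`. -/
lemma mgf_sq_gaussianReal (c : ℝ) :
    mgf (fun x ↦ x ^ 2) (gaussianReal 0 1) c = (√(1 - 2 * c))⁻¹ := by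
  rw [mgf, integral_gaussianReal_eq_integral_smul one_ne_zero]
  simp_rw [smul_eq_mul, gaussianPDFReal_zero_one_mul_exp_mul_sq]
  rw [integral_const_mul, integral_gaussian,
    show π / (1 / 2 - c) = 2 * π / (1 - 2 * c) by field_simp, sqrt_div (by positivity)]
  have : √(2 * π) ≠ 0 := by positivity
  field_simp

variable {ι : Type*} [Fintype ι]

lemma iIndepFun_sq_pi_gaussianReal :
    iIndepFun (fun i (x : ι → ℝ) ↦ x i ^ 2) (Measure.pi fun _ ↦ gaussianReal 0 1) :=
  iIndepFun_pi (X := fun _ y ↦ y ^ 2) fun _ ↦ by fun_prop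

lemma mgf_sum_sq_pi_gaussianReal (c : ℝ) :
    mgf (fun x ↦ ∑ i, x i ^ 2) (Measure.pi fun _ : ι ↦ gaussianReal 0 1) c
      = (√(1 - 2 * c))⁻¹ ^ Fintype.card ι := by
  have hsum := (iIndepFun_sq_pi_gaussianReal (ι := ι)).mgf_sum (t := c)
    (fun i ↦ (measurable_pi_apply i).pow_const 2) Finset.univ
  have heval (i : ι) : mgf (fun x : ι → ℝ ↦ x i ^ 2) (Measure.pi fun _ ↦ gaussianReal 0 1) c
      = mgf (fun x ↦ x ^ 2) (gaussianReal 0 1) c :=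
    integral_comp_eval (μ := fun _ : ι ↦ gaussianReal 0 1) (f := fun y : ℝ ↦ exp (c * y ^ 2))
      (by fun_prop)
  simpa only [heval, mgf_sq_gaussianReal, Finset.prod_const, Finset.card_univ, Finset.sum_fn]
    using hsum

lemma measureReal_pi_gaussianReal_sum_sq_ge_le_exp_mul {c : ℝ} (hc0 : 0 ≤ c) (hc : c < 1 / 2)
    (a : ℝ) :
    (Measure.pi fun _ : ι ↦ gaussianReal 0 1).real {x | a ≤ ∑ i, x i ^ 2}
      ≤ exp (-c * a) * (√(1 - 2 * c))⁻¹ ^ Fintype.card ι := by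
  have hint := (iIndepFun_sq_pi_gaussianReal (ι := ι)).integrable_exp_mul_sum (t := c)
    (fun i ↦ (measurable_pi_apply i).pow_const 2) (s := Finset.univ)
    fun i _ ↦ integrable_comp_eval (μ := fun _ : ι ↦ gaussianReal 0 1)
      (f := fun y : ℝ ↦ exp (c * y ^ 2)) (integrable_exp_mul_sq_gaussianReal hc)
  simp only [Finset.sum_apply] at hint
  rw [← mgf_sum_sq_pi_gaussianReal]
  exact measure_ge_le_exp_mul_mgf (X := fun x : ι → ℝ ↦ ∑ i, x i ^ 2) a hc0 hint

lemma add_two_mul_sqrt_mul_add_two_mul_div_pow_le_exp (n : ℕ) {t : ℝ} (ht : 0 ≤ t) :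
    ((n + 2 * √(n * t) + 2 * t) / n) ^ n ≤ exp (2 * √(n * t)) := by
  rcases Nat.eq_zero_or_pos n with rfl | hn
  · simp
  have hn' : (0 : ℝ) < n := by exact_mod_cast hn
  set v := √(t / n)
  have hv : √(n * t) = n * v := by
    rw [show (n : ℝ) * t = n ^ 2 * (t / n) by field_simp, sqrt_mul (by positivity), sqrt_sq hn'.le]
  have hv2 : v ^ 2 = t / n := sq_sqrt (by positivity)
  have hbase : (n + 2 * √(n * t) + 2 * t) / n = 1 + 2 * v + (2 * v) ^ 2 / 2 := by
    rw [hv, show t = n * v ^ 2 by rw [hv2]; field_simp]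
    field_simp
  calc ((n + 2 * √(n * t) + 2 * t) / n) ^ n = (1 + 2 * v + (2 * v) ^ 2 / 2) ^ n := by rw [hbase]
    _ ≤ exp (2 * v) ^ n := by gcongr; exact quadratic_le_exp_of_nonneg (by positivity)
    _ = exp (2 * √(n * t)) := by rw [← exp_nat_mul, hv]; ring_nf

theorem measureReal_pi_gaussianReal_sum_sq_ge_le_exp_neg [Nonempty ι] {t : ℝ} (ht : 0 ≤ t) :
    (Measure.pi fun _ : ι ↦ gaussianReal 0 1).real
      {x | Fintype.card ι + 2 * √(Fintype.card ι * t) + 2 * t ≤ ∑ i, x i ^ 2} ≤ exp (-t) := by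
  set d := Fintype.card ι
  set a : ℝ := d + 2 * √(d * t) + 2 * t
  have hd : (0 : ℝ) < d := by exact_mod_cast Fintype.card_pos
  have hda : d ≤ a := by have := sqrt_nonneg (d * t); linarith
  have ha : 0 < a := hd.trans_le hda
  -- the minimiser of `c ↦ exp (-c a) (1 - 2c)^(-d/2)`
  set c := (a - d) / (2 * a)
  have hc : 1 - 2 * c = d / a := by simp only [c]; field_simp; ring
  have hca : -c * a = -(√(d * t) + t) := by simp only [c, a]; field_simp; ring
  have hroot : (√(1 - 2 * c))⁻¹ ^ d ≤ exp (√(d * t)) := by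
    rw [hc, ← sqrt_inv, inv_div, ← pow_le_pow_iff_left₀ (by positivity) (by positivity) two_ne_zero,
      ← pow_mul, mul_comm, pow_mul, sq_sqrt (by positivity), ← exp_nat_mul]
    exact_mod_cast add_two_mul_sqrt_mul_add_two_mul_div_pow_le_exp d ht
  calc _ ≤ exp (-c * a) * (√(1 - 2 * c))⁻¹ ^ d :=
        measureReal_pi_gaussianReal_sum_sq_ge_le_exp_mul (div_nonneg (by linarith) (by positivity))
          ((div_lt_iff₀ (by positivity)).2 (by linarith)) a
    _ ≤ exp (-(√(d * t) + t)) * exp (√(d * t)) := by rw [hca]; gcongr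
    _ = exp (-t) := by rw [← exp_add]; ring_nf

lemma map_eq_pi_gaussianReal_of_iIndepFun {Ω : Type*} [MeasurableSpace Ω] {P : Measure Ω}
    {Z : Ω → ι → ℝ} (hindep : iIndepFun (fun i ω ↦ Z ω i) P)
    (hgauss : ∀ i, P.map (fun ω ↦ Z ω i) = gaussianReal 0 1) :
    P.map Z = Measure.pi fun _ ↦ gaussianReal 0 1 := by
  rw [hindep.map_fun_eq_pi_map fun i ↦ .of_map_ne_zero (by rw [hgauss i]; exact NeZero.ne _)]
  simp_rw [hgauss]

end ProbabilityTheory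

lemma MeasureTheory.one_sub_le_measure_le_of_measure_ge_le {α : Type*} [MeasurableSpace α]
    {μ : Measure α} [IsProbabilityMeasure μ] {f : α → ℝ} {a : ℝ} {ε : ENNReal}
    (h : μ {x | a ≤ f x} ≤ ε) : 1 - ε ≤ μ {x | f x ≤ a} := by
  rw [tsub_le_iff_right]
  calc 1 = μ Set.univ := measure_univ.symm
    _ ≤ μ ({x | f x ≤ a} ∪ {x | a ≤ f x}) := measure_mono fun x _ ↦ le_total (f x) a
    _ ≤ μ {x | f x ≤ a} + μ {x | a ≤ f x} := measure_union_le _ _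
    _ ≤ μ {x | f x ≤ a} + ε := by gcongr

theorem chi_squared_upper_tail_general {Ω : Type*} [MeasureSpace Ω]
    (d : ℕ) (Z : Ω → Fin d → ℝ)
    (hindep : iIndepFun (fun i ω => Z ω i) ℙ)
    (hgauss : ∀ i, Measure.map (fun ω => Z ω i) ℙ = gaussianReal 0 1)
    (δ : ℝ) (hδ : δ ∈ Set.Ioo (0 : ℝ) 1) :
    1 - ENNReal.ofReal δ ≤
      ℙ {ω | ∑ i, (Z ω i) ^ 2 ≤
        (d : ℝ) + 2 * Real.sqrt (d * Real.log (1 / δ)) + 2 * Real.log (1 / δ)} := by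
  obtain ⟨hδ0, hδ1⟩ := hδ
  have ht : 0 ≤ log (1 / δ) := log_nonneg (one_le_one_div hδ0 hδ1.le)
  have hδ : exp (-log (1 / δ)) = δ := by rw [one_div, log_inv, neg_neg, exp_log hδ0]
  generalize log (1 / δ) = t at ht hδ ⊢
  have hlaw := map_eq_pi_gaussianReal_of_iIndepFun hindep hgauss
  have hZ : AEMeasurable Z ℙ := .of_map_ne_zero (by rw [hlaw]; exact NeZero.ne _)
  rw [← Set.preimage_ofPred_eq (p := fun x : Fin d → ℝ ↦ ∑ i, x i ^ 2 ≤ _),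
    ← Measure.map_apply_of_aemeasurable hZ (measurableSet_le (by fun_prop) (by fun_prop)), hlaw]
  obtain rfl | hd := Nat.eq_zero_or_pos d
  · simp [ht]
  have : Nonempty (Fin d) := Fin.pos_iff_nonempty.1 hd
  refine one_sub_le_measure_le_of_measure_ge_le ?_
  have htail := measureReal_pi_gaussianReal_sum_sq_ge_le_exp_neg (ι := Fin d) ht
  rw [Fintype.card_fin, hδ] at htail
  exact (ENNReal.le_ofReal_iff_toReal_le (measure_ne_top _ _) hδ0.le).2 htail

/-- Laurent–Massart chi-squared upper tail: if `X = ‖Z‖²` with `Z ~ N(0, I_d)`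
(i.e. `X ~ χ²_d`), then for any `δ ∈ (0,1)`,
`Pr(X ≤ d + 2√(d ln(1/δ)) + 2 ln(1/δ)) ≥ 1 − δ`. -/
theorem chi_squared_upper_tail {Ω : Type*} [MeasureSpace Ω]
    [IsProbabilityMeasure (ℙ : Measure Ω)]
    (d : ℕ) (Z : Ω → Fin d → ℝ)
    (hindep : iIndepFun (fun i ω => Z ω i) ℙ)
    (hgauss : ∀ i, Measure.map (fun ω => Z ω i) ℙ = gaussianReal 0 1)
    (δ : ℝ) (hδ : δ ∈ Set.Ioo (0 : ℝ) 1) :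
    1 - ENNReal.ofReal δ ≤
      ℙ {ω | ∑ i, (Z ω i) ^ 2 ≤
        (d : ℝ) + 2 * Real.sqrt (d * Real.log (1 / δ)) + 2 * Real.log (1 / δ)} :=
  chi_squared_upper_tail_general d Z hindep hgauss δ hδ
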